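/- arXiv:1602.02450 — 4 statements merged into one kernel-verified Lean document; each statement's English description precedes it below -/
import Mathlib

section
/- (Factorization Theorem) Let l : ℝ → ℝ be a-linear-odd, i.e., l(x) - l(-x) = 2ax for all x. Let S = ((x_1,y_1),…,(x_m,y_m)) be a finite sample with x_i ∈ ℝ^d, y_i ∈ {-1,1}, and θ ∈ ℝ^d. Then (1/m) ∑_i l(y_i ⟨θ, x_i⟩) = (1/(2m)) ∑_i (l(⟨θ, x_i⟩) + l(-⟨θ, x_i⟩)) + a ⟨θ, μ_S⟩, where μ_S = (1/m) ∑_i y_i x_i is the mean operator. -/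
/-!
Split `l` into its even and odd parts. Linear-oddness says the odd part is `t ↦ a t`, and the
even part does not see the sign of its argument, so `l (y t) = (l t + l (-t)) / 2 + a y t` for
`y = ±1`. Averaging over the sample, the odd parts add up to `a ⟨θ, μ_S⟩` by linearity of the
inner product.
-/

open Finset

lemma apply_sign_mul_eq {l : ℝ → ℝ} {a : ℝ} (hl : ∀ x, l x - l (-x) = 2 * a * x)
    {s : ℝ} (hs : s = 1 ∨ s = -1) (t : ℝ) :
    l (s * t) = (l t + l (-t)) / 2 + a * (s * t) := by
  rcases hs with rfl | rfl
  · rw [one_mul]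
    linarith [hl t]
  · rw [neg_one_mul]
    linarith [hl t]

lemma inner_smul_sum_smul {E ι : Type*} [NormedAddCommGroup E] [InnerProductSpace ℝ E]
    (s : Finset ι) (c : ℝ) (y : ι → ℝ) (x : ι → E) (θ : E) :
    inner ℝ θ (c • ∑ i ∈ s, y i • x i) = c * ∑ i ∈ s, y i * inner ℝ θ (x i) := by
  simp only [inner_smul_right, inner_sum]

theorem factorization_theorem_general {d m : ℕ}
    (l : ℝ → ℝ) (a : ℝ) (hl : ∀ x, l x - l (-x) = 2 * a * x)
    (x : Fin m → EuclideanSpace ℝ (Fin d)) (y : Fin m → ℝ)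
    (hy : ∀ i, y i = 1 ∨ y i = -1)
    (θ : EuclideanSpace ℝ (Fin d))
    (μ : EuclideanSpace ℝ (Fin d))
    (hμ : μ = (m : ℝ)⁻¹ • ∑ i, y i • x i) :
    (1 / (m : ℝ)) * ∑ i, l (y i * (inner ℝ θ (x i) : ℝ))
      = (1 / (2 * (m : ℝ))) * ∑ i, (l (inner ℝ θ (x i) : ℝ) + l (-(inner ℝ θ (x i) : ℝ)))
        + a * (inner ℝ θ μ : ℝ) := by
  rw [hμ, inner_smul_sum_smul]
  simp only [apply_sign_mul_eq hl (hy _), sum_add_distrib, ← sum_div, ← mul_sum]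
  ring

theorem factorization_theorem {d m : ℕ} (hm : 1 ≤ m)
    (l : ℝ → ℝ) (a : ℝ) (hl : ∀ x, l x - l (-x) = 2 * a * x)
    (x : Fin m → EuclideanSpace ℝ (Fin d)) (y : Fin m → ℝ)
    (hy : ∀ i, y i = 1 ∨ y i = -1)
    (θ : EuclideanSpace ℝ (Fin d))
    (μ : EuclideanSpace ℝ (Fin d))
    (hμ : μ = (m : ℝ)⁻¹ • ∑ i, y i • x i) :
    (1 / (m : ℝ)) * ∑ i, l (y i * (inner ℝ θ (x i) : ℝ))
      = (1 / (2 * (m : ℝ))) * ∑ i, (l (inner ℝ θ (x i) : ℝ) + l (-(inner ℝ θ (x i) : ℝ)))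
        + a * (inner ℝ θ μ : ℝ) :=
  factorization_theorem_general l a hl x y hy θ μ hμ
end

section
/- If two samples S and S' of equal size m over ℝ^d × {-1,1} have the same multiset of observations {x_i} and equal mean operators μ_S = μ_{S'}, then for every a-linear-odd loss l and every θ ∈ ℝ^d, the empirical l-risks are equal: R_{S,l}(θ) = R_{S',l}(θ). -/
/-!
A loss with `l t - l (-t) = 2 a t` splits into an even part, which does not see the labels, and
the linear part `a t`. For labels `±1` the even part of `l (y t)` is that of `l t`, so the risk is a
label-free term plus `a ⟪θ, μ_S⟫`, and equal mean operators give equal risks.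
-/

open Finset RealInnerProductSpace

theorem loss_label_mul_eq {l : ℝ → ℝ} {a : ℝ} (hl : ∀ x, l x - l (-x) = 2 * a * x)
    {y : ℝ} (hy : y = 1 ∨ y = -1) (t : ℝ) :
    l (y * t) = (l t + l (-t)) / 2 + a * (y * t) := by
  have := hl t
  rcases hy with rfl | rfl <;> simp only [one_mul, neg_one_mul] <;> linarith

theorem sum_loss_label_mul_inner_eq {ι E : Type*} [Fintype ι] [NormedAddCommGroup E]
    [InnerProductSpace ℝ E] {l : ℝ → ℝ} {a : ℝ} (hl : ∀ x, l x - l (-x) = 2 * a * x)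
    (x : ι → E) {y : ι → ℝ} (hy : ∀ i, y i = 1 ∨ y i = -1) (θ : E) :
    ∑ i, l (y i * ⟪θ, x i⟫) =
      ∑ i, (l ⟪θ, x i⟫ + l (-⟪θ, x i⟫)) / 2 + a * ⟪θ, ∑ i, y i • x i⟫ := by
  simp only [loss_label_mul_eq hl (hy _), sum_add_distrib, inner_sum, real_inner_smul_right,
    mul_sum]

theorem mean_operator_sufficiency_general {d m : ℕ}
    (l : ℝ → ℝ) (a : ℝ) (hl : ∀ x, l x - l (-x) = 2 * a * x)
    (x : Fin m → EuclideanSpace ℝ (Fin d))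
    (y y' : Fin m → ℝ)
    (hy : ∀ i, y i = 1 ∨ y i = -1) (hy' : ∀ i, y' i = 1 ∨ y' i = -1)
    (hμ : (m : ℝ)⁻¹ • ∑ i, y i • x i = (m : ℝ)⁻¹ • ∑ i, y' i • x i)
    (θ : EuclideanSpace ℝ (Fin d)) :
    (1 / (m : ℝ)) * ∑ i, l (y i * (inner ℝ θ (x i) : ℝ))
      = (1 / (m : ℝ)) * ∑ i, l (y' i * (inner ℝ θ (x i) : ℝ)) := by
  have risk_eq : ∀ z : Fin m → ℝ, (∀ i, z i = 1 ∨ z i = -1) →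
      (1 / (m : ℝ)) * ∑ i, l (z i * ⟪θ, x i⟫) =
        (1 / (m : ℝ)) * ∑ i, (l ⟪θ, x i⟫ + l (-⟪θ, x i⟫)) / 2
          + a * ⟪θ, (m : ℝ)⁻¹ • ∑ i, z i • x i⟫ := by
    intro z hz
    rw [sum_loss_label_mul_inner_eq hl x hz, real_inner_smul_right]
    ring
  rw [risk_eq y hy, risk_eq y' hy', hμ]

theorem mean_operator_sufficiency {d m : ℕ} (hm : 1 ≤ m)
    (l : ℝ → ℝ) (a : ℝ) (hl : ∀ x, l x - l (-x) = 2 * a * x)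
    (x : Fin m → EuclideanSpace ℝ (Fin d))
    (y y' : Fin m → ℝ)
    (hy : ∀ i, y i = 1 ∨ y i = -1) (hy' : ∀ i, y' i = 1 ∨ y' i = -1)
    (hμ : (m : ℝ)⁻¹ • ∑ i, y i • x i = (m : ℝ)⁻¹ • ∑ i, y' i • x i)
    (θ : EuclideanSpace ℝ (Fin d)) :
    (1 / (m : ℝ)) * ∑ i, l (y i * (inner ℝ θ (x i) : ℝ))
      = (1 / (m : ℝ)) * ∑ i, l (y' i * (inner ℝ θ (x i) : ℝ)) :=
  mean_operator_sufficiency_general l a hl x y y' hy hy' hμ θ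
end

section
/- Let l be continuous with affine asymptotes at ±∞: there exist c₁, c₂, d₁, d₂ ∈ ℝ with lim_{x→+∞} (l(x) - c₁x - d₁) = 0 and lim_{x→-∞} (l(x) - c₂x - d₂) = 0. Then there exists q ∈ ℝ such that the odd part satisfies l_o(x) ≤ ((c₁+c₂)/2) x + q for all x ∈ ℝ. -/
open Filter

theorem odd_part_affine_upper_bound (l : ℝ → ℝ) (hl : Continuous l)
    (c₁ c₂ d₁ d₂ : ℝ)
    (h₁ : Tendsto (fun x => l x - c₁ * x - d₁) atTop (nhds 0))
    (h₂ : Tendsto (fun x => l x - c₂ * x - d₂) atBot (nhds 0)) :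
    ∃ q : ℝ, ∀ x, (l x - l (-x)) / 2 ≤ ((c₁ + c₂) / 2) * x + q := by
  set f : ℝ → ℝ := fun x => (l x - l (-x)) / 2 - ((c₁ + c₂) / 2) * x with hf
  have hcont : Continuous f := by
    apply Continuous.sub
    · exact ((hl.sub (hl.comp continuous_neg)).div_const 2)
    · exact continuous_const.mul continuous_id
  have ht : Tendsto f atTop (nhds ((d₁ - d₂) / 2)) := by
    have h2' : Tendsto (fun x => l (-x) - c₂ * (-x) - d₂) atTop (nhds 0) :=
      h₂.comp tendsto_neg_atTop_atBot
    have h := (h₁.sub h2').div_const 2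
    have heq : (fun x => (l x - c₁ * x - d₁ - (l (-x) - c₂ * (-x) - d₂)) / 2)
        = fun x => f x - (d₁ - d₂) / 2 := by
      funext x; simp only [hf]; ring
    rw [heq] at h
    simpa using h.add_const ((d₁ - d₂) / 2)
  have hb : Tendsto f atBot (nhds ((d₂ - d₁) / 2)) := by
    have h1' : Tendsto (fun x => l (-x) - c₁ * (-x) - d₁) atBot (nhds 0) :=
      h₁.comp tendsto_neg_atBot_atTop
    have h := (h₂.sub h1').div_const 2
    have heq : (fun x => (l x - c₂ * x - d₂ - (l (-x) - c₁ * (-x) - d₁)) / 2)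
        = fun x => f x - (d₂ - d₁) / 2 := by
      funext x; simp only [hf]; ring
    rw [heq] at h
    simpa using h.add_const ((d₂ - d₁) / 2)
  obtain ⟨A, hA⟩ := (ht.eventually (eventually_le_nhds (lt_add_one _))).exists_forall_of_atTop
  obtain ⟨B, hB⟩ := (hb.eventually (eventually_le_nhds (lt_add_one _))).exists_forall_of_atBot
  have hcpt : IsCompact (f '' Set.Icc B A) := (isCompact_Icc).image hcont
  obtain ⟨M, hM⟩ := hcpt.bddAbove
  refine ⟨max M (max ((d₁ - d₂) / 2 + 1) ((d₂ - d₁) / 2 + 1)), fun x => ?_⟩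
  have key : f x ≤ max M (max ((d₁ - d₂) / 2 + 1) ((d₂ - d₁) / 2 + 1)) := by
    rcases le_or_gt x B with hx | hx
    · exact le_trans (hB x hx) (le_max_of_le_right (le_max_right _ _))
    rcases le_or_gt A x with hx' | hx'
    · exact le_trans (hA x hx') (le_max_of_le_right (le_max_left _ _))
    · exact le_trans (hM ⟨x, ⟨hx.le, hx'.le⟩, rfl⟩) (le_max_left _ _)
  have : (l x - l (-x)) / 2 - ((c₁ + c₂) / 2) * x ≤ _ := key
  linarith
end

section
/- (Unbiasedness of the noisy mean operator estimator) Let p₊, p₋ ∈ [0, 1/2) and let y ∈ {-1,1} be a clean label. Let ỹ be a random label equal to -y with probability p_y (i.e., p₊ if y = 1, p₋ if y = -1) and y otherwise. Then E[ (ỹ - (p₋ - p₊)) / (1 - p₋ - p₊) ] = y, and consequently for any x ∈ ℝ^d, E[ ((ỹ - (p₋ - p₊))/(1 - p₋ - p₊)) · x ] = y·x. -/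
theorem noisy_mean_operator_unbiased {d : ℕ}
    (pp pm : ℝ) (hpp : 0 ≤ pp) (hpp' : pp < 1/2) (hpm : 0 ≤ pm) (hpm' : pm < 1/2)
    (y : ℝ) (hy : y = 1 ∨ y = -1)
    (py : ℝ) (hpy : py = if y = 1 then pp else pm)
    (x : EuclideanSpace ℝ (Fin d)) :
    py * ((-y - (pm - pp)) / (1 - pm - pp))
      + (1 - py) * ((y - (pm - pp)) / (1 - pm - pp)) = y ∧
    (py * ((-y - (pm - pp)) / (1 - pm - pp))) • x
      + ((1 - py) * ((y - (pm - pp)) / (1 - pm - pp))) • x = y • x := by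
  have hden : (1 : ℝ) - pm - pp ≠ 0 := by nlinarith
  have h1 : py * ((-y - (pm - pp)) / (1 - pm - pp))
      + (1 - py) * ((y - (pm - pp)) / (1 - pm - pp)) = y := by
    rcases hy with h | h <;> subst h <;> norm_num at hpy <;> subst hpy <;>
      field_simp <;> ring
  refine ⟨h1, ?_⟩
  rw [← add_smul, h1]
end
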